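/- Let p(s) = s^5 + α1·s^4 + α2·s^3 + α3·s^2 + α4·s + α5 be a monic real polynomial with αi > 0 for i = 1, ..., 5 and Δ2 = α1·α2 - α3 > 0. If p is Hurwitz stable (all complex roots of p have negative real part), then α2² - 4·α4 > 0. -/

import Mathlib

open Polynomial

/-!
Over `ℝ` a monic quintic is a linear factor times two monic quadratics, and each factor of a
Hurwitz-stable polynomial is again stable. A stable monic polynomial is positive on `[0, ∞)`, and
the two roots of `X ^ 2 + b X + c` sum to `-b`, so all coefficients of the factors are positive.
Expanding the product, `α2 ^ 2 - 4 * α4` is a square plus two positive terms.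
-/

def IsHurwitzStable (p : ℝ[X]) : Prop :=
  ∀ z : ℂ, aeval z p = 0 → z.re < 0

namespace IsHurwitzStable

variable {p q : ℝ[X]}

lemma of_dvd (hq : IsHurwitzStable q) (hpq : p ∣ q) : IsHurwitzStable p := by
  obtain ⟨r, rfl⟩ := hpq
  intro z hz
  exact hq z (by rw [map_mul, hz, zero_mul])

lemma eval_pos (hp : IsHurwitzStable p) (hm : p.Monic) {x : ℝ} (hx : 0 ≤ x) :
    0 < p.eval x := by
  rcases p.natDegree.eq_zero_or_pos with h0 | hdeg
  · simp [hm.natDegree_eq_zero.mp h0]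
  have hnoroot : ∀ y : ℝ, 0 ≤ y → p.eval y ≠ 0 := fun y hy hpy => by
    have := hp y (by
      rw [← Complex.coe_algebraMap, aeval_algebraMap_apply_eq_algebraMap_eval, hpy, map_zero])
    simp only [Complex.ofReal_re] at this
    linarith
  have htendsto := tendsto_atTop_of_leadingCoeff_nonneg p (natDegree_pos_iff_degree_pos.mp hdeg)
    (by rw [hm.leadingCoeff]; exact zero_le_one)
  obtain ⟨y, hy, hxy⟩ :=
    ((htendsto.eventually_gt_atTop 0).and (Filter.eventually_ge_atTop x)).exists
  by_contra! hneg
  obtain ⟨r, hr, hpr⟩ := intermediate_value_Icc hxy p.continuous.continuousOn ⟨hneg, hy.le⟩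
  exact hnoroot r (hx.trans hr.1) hpr

end IsHurwitzStable

lemma pos_of_isHurwitzStable_X_add_C {a : ℝ} (h : IsHurwitzStable (X + C a)) : 0 < a := by
  simpa using h (-a) (by simp)

lemma pos_of_isHurwitzStable_quadratic {b c : ℝ} (h : IsHurwitzStable (X ^ 2 + C b * X + C c)) :
    0 < b ∧ 0 < c := by
  have hroot (z : ℂ) (hz : z ^ 2 + b * z + c = 0) : z.re < 0 := h z (by simpa using hz)
  obtain ⟨u, hu⟩ := Complex.exists_root (f := X ^ 2 + C (b : ℂ) * X + C (c : ℂ))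
    (natDegree_pos_iff_degree_pos.mp
      (by rw [(isMonicOfDegree_add_add_two _ _).natDegree_eq]; norm_num))
  simp only [IsRoot.def, eval_add, eval_pow, eval_X, eval_mul, eval_C] at hu
  have hu_re := hroot u hu
  have hv_re := hroot (-b - u) (by linear_combination hu)
  simp only [Complex.sub_re, Complex.neg_re, Complex.ofReal_re] at hv_re
  refine ⟨by linarith, ?_⟩
  simpa using h.eval_pos (by monicity!) le_rfl

lemma IsHurwitzStable.exists_eq_X_add_C_mul_quadratic_mul_quadratic {p : ℝ[X]}
    (hp : IsHurwitzStable p) (hdeg : IsMonicOfDegree p 5) :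
    ∃ a b₁ c₁ b₂ c₂ : ℝ, 0 < a ∧ 0 < b₁ ∧ 0 < c₁ ∧ 0 < b₂ ∧ 0 < c₂ ∧
      p = (X + C a) * (X ^ 2 + C b₁ * X + C c₁) * (X ^ 2 + C b₂ * X + C c₂) := by
  obtain ⟨q₁, g, hq₁, hg, rfl⟩ := hdeg.eq_isMonicOfDegree_two_mul_isMonicOfDegree (n := 3)
  obtain ⟨q₂, l, hq₂, hl, rfl⟩ := hg.eq_isMonicOfDegree_two_mul_isMonicOfDegree (n := 1)
  obtain ⟨b₁, c₁, rfl⟩ := isMonicOfDegree_two_iff.mp hq₁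
  obtain ⟨b₂, c₂, rfl⟩ := isMonicOfDegree_two_iff.mp hq₂
  obtain ⟨a, rfl⟩ := isMonicOfDegree_one_iff.mp hl
  obtain ⟨hb₁, hc₁⟩ := pos_of_isHurwitzStable_quadratic (hp.of_dvd (dvd_mul_right _ _))
  obtain ⟨hb₂, hc₂⟩ := pos_of_isHurwitzStable_quadratic
    (hp.of_dvd (dvd_mul_of_dvd_right (dvd_mul_right _ _) _))
  have ha := pos_of_isHurwitzStable_X_add_C (hp.of_dvd (dvd_mul_of_dvd_right (dvd_mul_left _ _) _))
  exact ⟨a, b₁, c₁, b₂, c₂, ha, hb₁, hc₁, hb₂, hc₂, by ring⟩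

lemma sq_coeff_three_sub_four_mul_coeff_one_pos {p : ℝ[X]} {a b₁ c₁ b₂ c₂ : ℝ}
    (hp : p = (X + C a) * (X ^ 2 + C b₁ * X + C c₁) * (X ^ 2 + C b₂ * X + C c₂))
    (ha : 0 < a) (hb₁ : 0 < b₁) (hc₁ : 0 < c₁) (hb₂ : 0 < b₂) (hc₂ : 0 < c₂) :
    0 < p.coeff 3 ^ 2 - 4 * p.coeff 1 := by
  have hexpand : p = X ^ 5 + C (a + b₁ + b₂) * X ^ 4
      + C (c₁ + c₂ + b₁ * b₂ + a * (b₁ + b₂)) * X ^ 3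
      + C (b₁ * c₂ + b₂ * c₁ + a * (c₁ + c₂ + b₁ * b₂)) * X ^ 2
      + C (c₁ * c₂ + a * (b₁ * c₂ + b₂ * c₁)) * X + C (a * c₁ * c₂) := by
    simp only [hp, map_add, map_mul]; ring
  have hcoeff₃ : p.coeff 3 = c₁ + c₂ + b₁ * b₂ + a * (b₁ + b₂) := by
    simp only [hexpand, coeff_add, coeff_C_mul, coeff_X_pow, coeff_X, coeff_C]
    norm_num
  have hcoeff₁ : p.coeff 1 = c₁ * c₂ + a * (b₁ * c₂ + b₂ * c₁) := by
    simp only [hexpand, coeff_add, coeff_C_mul, coeff_X_pow, coeff_X, coeff_C]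
    norm_num
  rw [hcoeff₃, hcoeff₁]
  calc 0 < (c₁ - c₂ + a * (b₁ - b₂)) ^ 2 + 2 * (c₁ + c₂) * (b₁ * b₂)
        + (b₁ * b₂ + 2 * a * b₁) * (b₁ * b₂ + 2 * a * b₂) := by positivity
    _ = _ := by ring

theorem necessary_cond_stable_deg5_general (α1 α2 α3 α4 α5 : ℝ)
    (hstable : ∀ z : ℂ, aeval z (X ^ 5 + C α1 * X ^ 4 + C α2 * X ^ 3 + C α3 * X ^ 2
        + C α4 * X + C α5) = 0 → z.re < 0) :
    0 < α2 ^ 2 - 4 * α4 := by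
  obtain ⟨a, b₁, c₁, b₂, c₂, ha, hb₁, hc₁, hb₂, hc₂, hfac⟩ :=
    IsHurwitzStable.exists_eq_X_add_C_mul_quadratic_mul_quadratic hstable
      ⟨by compute_degree!, by monicity!⟩
  simpa [coeff_X, coeff_C, coeff_X_pow] using
    sq_coeff_three_sub_four_mul_coeff_one_pos hfac ha hb₁ hc₁ hb₂ hc₂

theorem necessary_cond_stable_deg5 (α1 α2 α3 α4 α5 : ℝ)
    (h1 : 0 < α1) (h2 : 0 < α2) (h3 : 0 < α3) (h4 : 0 < α4) (h5 : 0 < α5)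
    (hΔ2 : 0 < α1 * α2 - α3)
    (hstable : ∀ z : ℂ, aeval z (X ^ 5 + C α1 * X ^ 4 + C α2 * X ^ 3 + C α3 * X ^ 2
        + C α4 * X + C α5) = 0 → z.re < 0) :
    0 < α2 ^ 2 - 4 * α4 :=
  necessary_cond_stable_deg5_general α1 α2 α3 α4 α5 hstable
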